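/- arXiv:1808.06674 — 3 statements merged into one kernel-verified Lean document; each statement's English description precedes it below -/
import Mathlib

section
/- Let J and H be real n×n matrices with J skew-symmetric and H symmetric, and let y : ℝ → ℝⁿ be differentiable with y′(t) = (JH)·y(t) for all t (matrix–vector product). Then for every natural number k, the function t ↦ ½ y(t)ᵀ H (JH)^{2k} y(t) is constant; in particular (k = 0) the energy ½ y(t)ᵀ H y(t) is conserved. -/
/-!
`A = J H` is skew-adjoint for the form of `H`: `Aᵀ H = -H A`. Hence `M = H A^m` satisfies the
Lyapunov identity `Aᵀ M + M A = 0`, which is exactly the vanishing of the derivative of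
`y ⬝ᵥ M y` along solutions of `ẏ = A y`. This holds for every `m`; only even `m` give nontrivial
integrals, since `H A^m` is skew-symmetric for odd `m`.
-/

open Matrix

section Derivatives

variable {𝕜 ι : Type*} [NontriviallyNormedField 𝕜] [Fintype ι]
  {u v : 𝕜 → ι → 𝕜} {u' v' : ι → 𝕜} {t : 𝕜}

theorem HasDerivAt.dotProduct (hu : HasDerivAt u u' t) (hv : HasDerivAt v v' t) :
    HasDerivAt (fun t => u t ⬝ᵥ v t) (u' ⬝ᵥ v t + u t ⬝ᵥ v') t := by
  have hcoord (i : ι) : HasDerivAt (fun t => u t i * v t i) (u' i * v t i + u t i * v' i) t :=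
    (hasDerivAt_pi.1 hu i).mul (hasDerivAt_pi.1 hv i)
  simpa only [_root_.dotProduct, Finset.sum_add_distrib] using
    HasDerivAt.fun_sum fun i _ => hcoord i

theorem HasDerivAt.mulVec {κ : Type*} [Fintype κ] (M : Matrix κ ι 𝕜) (hu : HasDerivAt u u' t) :
    HasDerivAt (fun t => M *ᵥ u t) (M *ᵥ u') t := by
  refine hasDerivAt_pi.2 fun i => ?_
  have hcoord (j : ι) : HasDerivAt (fun t => M i j * u t j) (M i j * u' j) t :=
    (hasDerivAt_pi.1 hu j).const_mul _
  exact HasDerivAt.fun_sum fun j _ => hcoord j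

theorem HasDerivAt.dotProduct_mulVec_of_linear {A M : Matrix ι ι 𝕜} {y : 𝕜 → ι → 𝕜}
    (hy : HasDerivAt y (A *ᵥ y t) t) :
    HasDerivAt (fun t => y t ⬝ᵥ (M *ᵥ y t)) (y t ⬝ᵥ ((Aᵀ * M + M * A) *ᵥ y t)) t := by
  convert hy.dotProduct (hy.mulVec M) using 1
  rw [add_mulVec, dotProduct_add, ← mulVec_mulVec, ← mulVec_mulVec, dotProduct_transpose_mulVec,
    dotProduct_comm]

end Derivatives

theorem dotProduct_mulVec_const_of_transpose_mul_add_mul_eq_zero {ι : Type*} [Fintype ι]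
    {A M : Matrix ι ι ℝ} {y : ℝ → ι → ℝ} (hy : ∀ t, HasDerivAt y (A *ᵥ y t) t)
    (hAM : Aᵀ * M + M * A = 0) (t s : ℝ) :
    y t ⬝ᵥ (M *ᵥ y t) = y s ⬝ᵥ (M *ᵥ y s) := by
  have hderiv (r : ℝ) : HasDerivAt (fun r => y r ⬝ᵥ (M *ᵥ y r)) 0 r := by
    simpa only [hAM, zero_mulVec, dotProduct_zero] using (hy r).dotProduct_mulVec_of_linear (M := M)
  exact is_const_of_deriv_eq_zero (fun r => (hderiv r).differentiableAt)
    (fun r => (hderiv r).deriv) t s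

theorem transpose_mul_mul_pow_add_mul_pow_mul_eq_zero {ι R : Type*} [Fintype ι] [DecidableEq ι]
    [CommRing R] {J H : Matrix ι ι R} (hJ : Jᵀ = -J) (hH : Hᵀ = H) (m : ℕ) :
    (J * H)ᵀ * (H * (J * H) ^ m) + H * (J * H) ^ m * (J * H) = 0 := by
  have hskew : (J * H)ᵀ * H = -(H * (J * H)) := by
    rw [transpose_mul, hJ, hH, Matrix.mul_neg, Matrix.neg_mul, Matrix.mul_assoc]
  rw [← Matrix.mul_assoc, hskew, Matrix.neg_mul, Matrix.mul_assoc H (J * H), ← pow_succ',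
    Matrix.mul_assoc H, ← pow_succ, neg_add_cancel]

/-- For `J` skew-symmetric and `H` symmetric, along any solution of the linear
Hamiltonian system `ẏ = (J H) y`, each quadratic function
`t ↦ ½ y(t)ᵀ H (J H)^(2k) y(t)` is constant (in particular, `k = 0` gives
conservation of the energy `½ yᵀ H y`). -/
theorem first_integrals_linear_hamiltonian {n : ℕ} (J H : Matrix (Fin n) (Fin n) ℝ)
    (hJ : Jᵀ = -J) (hH : Hᵀ = H)
    (y : ℝ → (Fin n → ℝ))
    (hy : ∀ t : ℝ, HasDerivAt y ((J * H) *ᵥ y t) t)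
    (k : ℕ) (t s : ℝ) :
    (1 / 2 : ℝ) * (y t ⬝ᵥ ((H * (J * H) ^ (2 * k)) *ᵥ y t)) =
      (1 / 2 : ℝ) * (y s ⬝ᵥ ((H * (J * H) ^ (2 * k)) *ᵥ y s)) := by
  rw [dotProduct_mulVec_const_of_transpose_mul_add_mul_eq_zero hy
    (transpose_mul_mul_pow_add_mul_pow_mul_eq_zero hJ hH (2 * k)) t s]
end

section
/- Let J and H be real n×n matrices with J skew-symmetric and H symmetric. Then for all natural numbers k, p and every vector y ∈ ℝⁿ, one has (H(JH)^{2k} y)ᵀ · J · (H(JH)^{2p} y) = 0. In other words, the quadratic functions H_k(y) = ½ yᵀ H (JH)^{2k} y are pairwise in involution with respect to the Poisson bracket {F, G}(y) = ∇F(y)ᵀ J ∇G(y). -/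
/-!
Put `S m = H (J H)^m`. Transposing reverses the word and flips the sign of every `J`, so
`S mᵀ = (-1)^m S m`, and inserting `J` between two such words concatenates them:
`S a * J * S b = S (a + b + 1)`. Hence the bracket is `yᵀ S (2k + 2p + 1) y`, a quadratic form
with a skew-symmetric matrix, which vanishes.
-/

open Matrix

namespace Matrix

variable {ι R : Type*} [Fintype ι]

lemma dotProduct_mulVec_self_eq_zero_of_transpose_eq_neg [CommRing R] [NoZeroDivisors R]
    [CharZero R] {A : Matrix ι ι R} (hA : Aᵀ = -A) (x : ι → R) : x ⬝ᵥ (A *ᵥ x) = 0 := by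
  have h := dotProduct_transpose_mulVec A x x
  rw [hA, neg_mulVec, dotProduct_neg] at h
  exact CharZero.neg_eq_self_iff.mp h

variable [DecidableEq ι] [CommRing R]

lemma mul_mul_pow_mul_mul_mul_pow (J H : Matrix ι ι R) (a b : ℕ) :
    H * (J * H) ^ a * J * (H * (J * H) ^ b) = H * (J * H) ^ (a + b + 1) := by
  rw [add_assoc, pow_add, pow_succ']
  simp only [Matrix.mul_assoc]

lemma transpose_mul_pow_mul_of_skew {J H : Matrix ι ι R} (hJ : Jᵀ = -J) (hH : Hᵀ = H) (m : ℕ) :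
    (H * (J * H) ^ m)ᵀ = (-1 : R) ^ m • (H * (J * H) ^ m) := by
  have hJH : (J * H)ᵀ = -(H * J) := by rw [transpose_mul, hJ, hH, mul_neg]
  rw [transpose_mul, transpose_pow, hJH, hH, ← neg_one_smul R (H * J), smul_pow, smul_mul_assoc,
    ← (SemiconjBy.pow_right (Matrix.mul_assoc H J H).symm m).eq]

end Matrix

/-- For `J` skew-symmetric and `H` symmetric, the quadratic first integrals
`H_k(y) = ½ yᵀ H (J H)^(2k) y` are pairwise in involution with respect to the
Poisson bracket `{F, G}(y) = ∇F(y)ᵀ J ∇G(y)`: since `∇H_k(y) = H (J H)^(2k) y`,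
this reads `(H (J H)^(2k) y)ᵀ J (H (J H)^(2p) y) = 0`. -/
theorem first_integrals_in_involution {n : ℕ} (J H : Matrix (Fin n) (Fin n) ℝ)
    (hJ : Jᵀ = -J) (hH : Hᵀ = H) (k p : ℕ) (y : Fin n → ℝ) :
    ((H * (J * H) ^ (2 * k)) *ᵥ y) ⬝ᵥ (J *ᵥ ((H * (J * H) ^ (2 * p)) *ᵥ y)) = 0 := by
  have hskew : (H * (J * H) ^ (2 * k + 2 * p + 1))ᵀ = -(H * (J * H) ^ (2 * k + 2 * p + 1)) := by
    rw [transpose_mul_pow_mul_of_skew hJ hH, Odd.neg_one_pow ⟨k + p, by ring⟩, neg_one_smul]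
  rw [dotProduct_comm, ← dotProduct_transpose_mulVec, transpose_mul_pow_mul_of_skew hJ hH,
    Even.neg_one_pow (even_two_mul k), one_smul, mulVec_mulVec, mulVec_mulVec,
    mul_mul_pow_mul_mul_mul_pow]
  exact dotProduct_mulVec_self_eq_zero_of_transpose_eq_neg hskew y
end

section
/- Let H₁₁ be a real m×m matrix, let A be the 2m×2m block matrix A = [[0, I_m], [−H₁₁, 0]], and let y₀ = (0, p₀) ∈ ℝ^{2m} with p₀ ∈ ℝ^m. Then for every natural number k: A^{2k}·y₀ = (0, (−H₁₁)^k p₀) and A^{2k+1}·y₀ = ((−H₁₁)^k p₀, 0). Consequently the Krylov subspace K_{2n}(A, y₀) = span{y₀, Ay₀, …, A^{2n−1}y₀} equals span{e₁⊗(−H₁₁)^j p₀, e₂⊗(−H₁₁)^j p₀ : j = 0, …, n−1}, where e₁, e₂ are the canonical basis vectors of ℝ² and ⊗ the Kronecker product. -/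
/-!
The companion matrix `J = [[0, I], [H, 0]]` squares to the block-diagonal matrix `diag(H, H)`,
so `J^(2k) = diag(H^k, H^k)` and `J^(2k+1) = [[0, H^k], [H^(k+1), 0]]`. Applied to `(0, p)`, even
powers give `(0, H^k p)` and odd powers give `(H^k p, 0)`; splitting the indices `j < 2n` of the
Krylov vectors by parity then identifies the two spanning sets.
-/

open Matrix

namespace Matrix

variable {ι R : Type*} [Fintype ι] [DecidableEq ι] [Semiring R]

theorem fromBlocks_zero_one_sq (H : Matrix ι ι R) :
    fromBlocks 0 1 H 0 ^ 2 = fromBlocks H 0 0 H := by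
  simp [sq, fromBlocks_multiply]

theorem fromBlocks_zero_one_pow_two_mul (H : Matrix ι ι R) (k : ℕ) :
    fromBlocks 0 1 H 0 ^ (2 * k) = fromBlocks (H ^ k) 0 0 (H ^ k) := by
  rw [pow_mul, fromBlocks_zero_one_sq, fromBlocks_diagonal_pow]

theorem fromBlocks_zero_one_pow_two_mul_mulVec (H : Matrix ι ι R) (p : ι → R) (k : ℕ) :
    fromBlocks 0 1 H 0 ^ (2 * k) *ᵥ Sum.elim (0 : ι → R) p =
      Sum.elim (0 : ι → R) ((H ^ k) *ᵥ p) := by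
  simp [fromBlocks_zero_one_pow_two_mul, fromBlocks_mulVec]

theorem fromBlocks_zero_one_pow_two_mul_add_one_mulVec (H : Matrix ι ι R) (p : ι → R)
    (k : ℕ) :
    fromBlocks 0 1 H 0 ^ (2 * k + 1) *ᵥ Sum.elim (0 : ι → R) p =
      Sum.elim ((H ^ k) *ᵥ p) (0 : ι → R) := by
  rw [pow_succ', ← mulVec_mulVec, fromBlocks_zero_one_pow_two_mul_mulVec]
  simp [fromBlocks_mulVec]

end Matrix

theorem Set.setOf_exists_lt_two_mul_eq {α : Type*} (f : ℕ → α) (n : ℕ) :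
    {w | ∃ j < 2 * n, w = f j} =
      {w | ∃ j < n, w = f (2 * j + 1)} ∪ {w | ∃ j < n, w = f (2 * j)} := by
  ext w
  constructor
  · rintro ⟨j, hj, rfl⟩
    rcases Nat.even_or_odd' j with ⟨k, rfl | rfl⟩
    · exact Or.inr ⟨k, by omega, rfl⟩
    · exact Or.inl ⟨k, by omega, rfl⟩
  · rintro (⟨j, hj, rfl⟩ | ⟨j, hj, rfl⟩)
    · exact ⟨2 * j + 1, by omega, rfl⟩
    · exact ⟨2 * j, by omega, rfl⟩

/-- Krylov subspace structure for `A = [[0, I], [−H₁₁, 0]]` and `y₀ = (0, p₀)`: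
`A^(2k) y₀ = (0, (−H₁₁)^k p₀)` and `A^(2k+1) y₀ = ((−H₁₁)^k p₀, 0)` for all
`k`, and consequently the Krylov subspace
`K_{2n}(A, y₀) = span{y₀, A y₀, …, A^(2n−1) y₀}` equals
`span{((−H₁₁)^j p₀, 0), (0, (−H₁₁)^j p₀) : j = 0, …, n−1}` (vectors in
`ℝ^{2m}` written in block form `(u, v)`, i.e. `e₁ ⊗ u + e₂ ⊗ v`). -/
theorem krylov_subspace_special_structure {m : ℕ} (n : ℕ)
    (H₁₁ : Matrix (Fin m) (Fin m) ℝ)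
    (A : Matrix (Fin m ⊕ Fin m) (Fin m ⊕ Fin m) ℝ)
    (hA : A = Matrix.fromBlocks 0 1 (-H₁₁) 0)
    (p₀ : Fin m → ℝ)
    (y₀ : (Fin m ⊕ Fin m) → ℝ)
    (hy₀ : y₀ = Sum.elim (0 : Fin m → ℝ) p₀) :
    (∀ k : ℕ, (A ^ (2 * k)) *ᵥ y₀ = Sum.elim (0 : Fin m → ℝ) (((-H₁₁) ^ k) *ᵥ p₀)) ∧
    (∀ k : ℕ, (A ^ (2 * k + 1)) *ᵥ y₀ = Sum.elim (((-H₁₁) ^ k) *ᵥ p₀) (0 : Fin m → ℝ)) ∧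
    Submodule.span ℝ {w : (Fin m ⊕ Fin m) → ℝ | ∃ j < 2 * n, w = (A ^ j) *ᵥ y₀} =
      Submodule.span ℝ
        ({w | ∃ j < n, w = Sum.elim (((-H₁₁) ^ j) *ᵥ p₀) (0 : Fin m → ℝ)} ∪
         {w | ∃ j < n, w = Sum.elim (0 : Fin m → ℝ) (((-H₁₁) ^ j) *ᵥ p₀)}) := by
  subst hA hy₀
  refine ⟨fromBlocks_zero_one_pow_two_mul_mulVec _ _,
    fromBlocks_zero_one_pow_two_mul_add_one_mulVec _ _, ?_⟩
  simp only [Set.setOf_exists_lt_two_mul_eq (fromBlocks 0 1 (-H₁₁) 0 ^ · *ᵥ Sum.elim 0 p₀),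
    fromBlocks_zero_one_pow_two_mul_mulVec, fromBlocks_zero_one_pow_two_mul_add_one_mulVec]
end
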